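/- Under the Lipschitz and strong convexity assumptions, the function F(θ) = ∫ Φ(ξ,θ) π^{γ,ε}(dξ|θ) attains a minimum on ℝ^d; in particular there exists R₀ > 0 depending only on L, λ, C₀ such that F attains its minimum on the closed ball of radius R₀. -/
import Mathlib


open MeasureTheory Metric Set
open scoped RealInnerProductSpace

/-- under the Lipschitz and strong convexity assumptions, the function
`F(θ) = ∫ Φ(ξ,θ) π^{γ,ε}(dξ|θ)` (written with π-integrals expressed as weighted
Lebesgue integrals over the ε-ball divided by the normalising constant) attains a
minimum on ℝ^d; in particular there exists `R₀ > 0` depending only on the data such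
that `F` attains its minimum on the closed ball of radius `R₀`. -/
theorem F_attains_minimum
    (d dY : ℕ) (ε L lam γ C₀ : ℝ) (hε : 0 < ε) (hε1 : ε ≤ 1) (hL : 1 < L)
    (hlam : 0 < lam) (hγ : 0 < γ)
    (Φ : EuclideanSpace ℝ (Fin dY) → EuclideanSpace ℝ (Fin d) → ℝ)
    (Φx : EuclideanSpace ℝ (Fin dY) → EuclideanSpace ℝ (Fin d) → EuclideanSpace ℝ (Fin dY))
    (Φθ : EuclideanSpace ℝ (Fin dY) → EuclideanSpace ℝ (Fin d) → EuclideanSpace ℝ (Fin d))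
    (hΦcont : Continuous fun p : EuclideanSpace ℝ (Fin dY) × EuclideanSpace ℝ (Fin d) =>
      Φ p.1 p.2)
    (hΦ00 : Φ 0 0 = 0) (hΦθ00 : Φθ 0 0 = 0) (hC₀ : C₀ = ‖Φx 0 0‖)
    (hΦbdd : ∃ c : ℝ, ∀ ξ ∈ closedBall (0 : EuclideanSpace ℝ (Fin dY)) ε, ∀ θ, c ≤ Φ ξ θ)
    (hΦx : ∀ ξ θ, HasGradientAt (fun x => Φ x θ) (Φx ξ θ) ξ)
    (hΦθ : ∀ ξ θ, HasGradientAt (fun θ' => Φ ξ θ') (Φθ ξ θ) θ)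
    (hLipx : ∀ ξ ∈ closedBall (0 : EuclideanSpace ℝ (Fin dY)) ε,
      ∀ ξ' ∈ closedBall (0 : EuclideanSpace ℝ (Fin dY)) ε,
      ∀ θ θ', ‖Φx ξ θ - Φx ξ' θ'‖ ≤ L * (‖ξ - ξ'‖ + ‖θ - θ'‖))
    (hLipθ : ∀ ξ ∈ closedBall (0 : EuclideanSpace ℝ (Fin dY)) ε,
      ∀ ξ' ∈ closedBall (0 : EuclideanSpace ℝ (Fin dY)) ε,
      ∀ θ θ', ‖Φθ ξ θ - Φθ ξ' θ'‖ ≤ L * (‖ξ - ξ'‖ + ‖θ - θ'‖))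
    (hConv : ∀ ξ ∈ closedBall (0 : EuclideanSpace ℝ (Fin dY)) ε,
      ∀ θ θ', Φ ξ θ ≥ Φ ξ θ' + ⟪θ - θ', Φθ ξ θ'⟫ + lam * ‖θ - θ'‖ ^ 2)
    (F : EuclideanSpace ℝ (Fin d) → ℝ)
    (hF : ∀ θ, F θ = (∫ ξ in closedBall (0 : EuclideanSpace ℝ (Fin dY)) ε,
        Φ ξ θ * Real.exp (γ * Φ ξ θ)) /
      (∫ ξ in closedBall (0 : EuclideanSpace ℝ (Fin dY)) ε, Real.exp (γ * Φ ξ θ)))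
    (hZpos : ∀ θ,
      0 < ∫ ξ in closedBall (0 : EuclideanSpace ℝ (Fin dY)) ε, Real.exp (γ * Φ ξ θ))
    (hFcont : Continuous F) :
    ∃ R₀ > 0, ∃ θstar : EuclideanSpace ℝ (Fin d),
      ‖θstar‖ ≤ R₀ ∧ ∀ θ, F θstar ≤ F θ := by
  classical
  have h0B : (0 : EuclideanSpace ℝ (Fin dY)) ∈ closedBall (0 : EuclideanSpace ℝ (Fin dY)) ε :=
    mem_closedBall_self hε.le
  have hC₀0 : 0 ≤ C₀ := hC₀ ▸ norm_nonneg _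
  set K : ℝ := C₀ + L with hKdef
  have hK0 : 0 < K := by positivity
  have hξnorm : ∀ ξ ∈ closedBall (0 : EuclideanSpace ℝ (Fin dY)) ε, ‖ξ‖ ≤ ε := by
    intro ξ hξ
    simpa [dist_eq_norm] using mem_closedBall.mp hξ
  -- bound on ‖Φθ ξ 0‖
  have hgradθ : ∀ ξ ∈ closedBall (0 : EuclideanSpace ℝ (Fin dY)) ε, ‖Φθ ξ 0‖ ≤ L := by
    intro ξ hξ
    have h := hLipθ ξ hξ 0 h0B 0 0
    calc ‖Φθ ξ 0‖ = ‖Φθ ξ 0 - Φθ 0 0‖ := by rw [hΦθ00, sub_zero]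
      _ ≤ L * (‖ξ - 0‖ + ‖(0 : EuclideanSpace ℝ (Fin d)) - 0‖) := h
      _ = L * ‖ξ‖ := by simp
      _ ≤ L * 1 := by
          have := hξnorm ξ hξ
          nlinarith [hξnorm ξ hξ]
      _ = L := mul_one L
  -- bound |Φ ξ 0| ≤ K
  have hΦ0bound : ∀ ξ ∈ closedBall (0 : EuclideanSpace ℝ (Fin dY)) ε, ‖Φ ξ 0‖ ≤ K := by
    intro ξ hξ
    have hderiv : ∀ x ∈ closedBall (0 : EuclideanSpace ℝ (Fin dY)) ε,
        HasFDerivWithinAt (fun x => Φ x 0)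
          (InnerProductSpace.toDual ℝ _ (Φx x 0)) (closedBall 0 ε) x :=
      fun x _ => (hΦx x 0).hasFDerivAt.hasFDerivWithinAt
    have hbound : ∀ x ∈ closedBall (0 : EuclideanSpace ℝ (Fin dY)) ε,
        ‖InnerProductSpace.toDual ℝ (EuclideanSpace ℝ (Fin dY)) (Φx x 0)‖ ≤ K := by
      intro x hx
      rw [LinearIsometryEquiv.norm_map]
      have h1 : ‖Φx x 0 - Φx 0 0‖ ≤ L * (‖x - 0‖ + ‖(0 : EuclideanSpace ℝ (Fin d)) - 0‖) :=
        hLipx x hx 0 h0B 0 0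
      have h2 : ‖Φx x 0‖ ≤ ‖Φx x 0 - Φx 0 0‖ + ‖Φx 0 0‖ := by
        simpa using norm_add_le (Φx x 0 - Φx 0 0) (Φx 0 0)
      have h3 : ‖x‖ ≤ ε := hξnorm x hx
      simp only [sub_zero, norm_zero, add_zero] at h1
      have hL0 : (0:ℝ) < L := lt_trans one_pos hL
      nlinarith [norm_nonneg (Φx 0 0), hC₀]
    have := (convex_closedBall (0 : EuclideanSpace ℝ (Fin dY)) ε).norm_image_sub_le_of_norm_hasFDerivWithin_le
      hderiv hbound h0B hξ
    simp only [hΦ00, sub_zero] at this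
    calc ‖Φ ξ 0‖ ≤ K * ‖ξ‖ := by simpa using this
      _ ≤ K * 1 := by nlinarith [hξnorm ξ hξ]
      _ = K := mul_one K
  -- pointwise lower bound
  have hlow : ∀ (θ : EuclideanSpace ℝ (Fin d)) (ξ : EuclideanSpace ℝ (Fin dY)),
      ξ ∈ closedBall (0 : EuclideanSpace ℝ (Fin dY)) ε →
      lam * ‖θ‖ ^ 2 - L * ‖θ‖ - K ≤ Φ ξ θ := by
    intro θ ξ hξ
    have hc := hConv ξ hξ θ 0
    simp only [sub_zero] at hc
    have hinner : -(‖θ‖ * ‖Φθ ξ 0‖) ≤ ⟪θ, Φθ ξ 0⟫ :=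
      neg_le_of_neg_le (by simpa using (neg_le_abs _).trans (abs_real_inner_le_norm θ (Φθ ξ 0)))
    have hinner' : -(‖θ‖ * L) ≤ ⟪θ, Φθ ξ 0⟫ := by
      refine le_trans ?_ hinner
      have := hgradθ ξ hξ
      nlinarith [norm_nonneg θ]
    have hΦξ0 : -K ≤ Φ ξ 0 := by
      have := hΦ0bound ξ hξ
      have := abs_le.mp (by simpa [Real.norm_eq_abs] using this)
      linarith [this.1]
    nlinarith
  -- continuity / integrability
  have hcontθ : ∀ θ : EuclideanSpace ℝ (Fin d), Continuous (fun ξ => Φ ξ θ) := by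
    intro θ
    exact hΦcont.comp (continuous_id.prodMk continuous_const)
  have hcompact := isCompact_closedBall (0 : EuclideanSpace ℝ (Fin dY)) ε
  have hintZ : ∀ θ, IntegrableOn (fun ξ => Real.exp (γ * Φ ξ θ))
      (closedBall (0 : EuclideanSpace ℝ (Fin dY)) ε) :=
    fun θ => ((Real.continuous_exp.comp (continuous_const.mul (hcontθ θ))).continuousOn).integrableOn_compact hcompact
  have hintF : ∀ θ, IntegrableOn (fun ξ => Φ ξ θ * Real.exp (γ * Φ ξ θ))
      (closedBall (0 : EuclideanSpace ℝ (Fin dY)) ε) :=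
    fun θ => (((hcontθ θ).mul (Real.continuous_exp.comp (continuous_const.mul (hcontθ θ)))).continuousOn).integrableOn_compact hcompact
  -- F lower bound from pointwise bound
  have key_lower : ∀ (θ : EuclideanSpace ℝ (Fin d)) (c : ℝ),
      (∀ ξ ∈ closedBall (0 : EuclideanSpace ℝ (Fin dY)) ε, c ≤ Φ ξ θ) → c ≤ F θ := by
    intro θ c hc
    rw [hF θ, le_div_iff₀ (hZpos θ)]
    have heq : c * ∫ ξ in closedBall (0 : EuclideanSpace ℝ (Fin dY)) ε, Real.exp (γ * Φ ξ θ)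
        = ∫ ξ in closedBall (0 : EuclideanSpace ℝ (Fin dY)) ε, c * Real.exp (γ * Φ ξ θ) :=
      (integral_const_mul c _).symm
    rw [heq]
    refine setIntegral_mono_on ((hintZ θ).const_mul c) (hintF θ) measurableSet_closedBall ?_
    intro ξ hξ
    exact mul_le_mul_of_nonneg_right (hc ξ hξ) (Real.exp_pos _).le
  -- F upper bound at 0
  have key_upper : F 0 ≤ K := by
    rw [hF 0, div_le_iff₀ (hZpos 0)]
    have heq : K * ∫ ξ in closedBall (0 : EuclideanSpace ℝ (Fin dY)) ε, Real.exp (γ * Φ ξ 0)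
        = ∫ ξ in closedBall (0 : EuclideanSpace ℝ (Fin dY)) ε, K * Real.exp (γ * Φ ξ 0) :=
      (integral_const_mul K _).symm
    rw [heq]
    refine setIntegral_mono_on (hintF 0) ((hintZ 0).const_mul K) measurableSet_closedBall ?_
    intro ξ hξ
    have h1 : Φ ξ 0 ≤ K := by
      have := abs_le.mp (by simpa [Real.norm_eq_abs] using hΦ0bound ξ hξ)
      exact this.2
    exact mul_le_mul_of_nonneg_right h1 (Real.exp_pos _).le
  -- choose R₀
  set R₀ : ℝ := max 1 ((L + 2 * K) / lam) with hR₀def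
  have hR₀1 : (1:ℝ) ≤ R₀ := le_max_left _ _
  have hR₀pos : 0 < R₀ := lt_of_lt_of_le one_pos hR₀1
  have hR₀lam : L + 2 * K ≤ lam * R₀ := by
    have h := le_max_right 1 ((L + 2 * K) / lam)
    rw [div_le_iff₀ hlam] at h
    linarith [mul_comm R₀ lam ▸ h]
  -- minimiser on closed ball
  obtain ⟨θstar, hθmem, hθmin⟩ :=
    (isCompact_closedBall (0 : EuclideanSpace ℝ (Fin d)) R₀).exists_isMinOn
      ⟨0, mem_closedBall_self hR₀pos.le⟩ hFcont.continuousOn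
  refine ⟨R₀, hR₀pos, θstar, by simpa [dist_eq_norm] using mem_closedBall.mp hθmem, ?_⟩
  intro θ
  by_cases hθ : θ ∈ closedBall (0 : EuclideanSpace ℝ (Fin d)) R₀
  · exact hθmin hθ
  · have ht : R₀ < ‖θ‖ := by
      simp only [mem_closedBall, dist_eq_norm, sub_zero, not_le] at hθ
      simpa using hθ
    have h1 : F θstar ≤ F 0 := hθmin (mem_closedBall_self hR₀pos.le)
    have h2 : K ≤ lam * ‖θ‖ ^ 2 - L * ‖θ‖ - K := by
      have h4 := mul_le_mul_of_nonneg_right hR₀lam (norm_nonneg θ)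
      have h5 : (1:ℝ) ≤ ‖θ‖ := le_trans hR₀1 ht.le
      nlinarith [mul_nonneg (mul_nonneg hlam.le (sub_nonneg.mpr ht.le)) (norm_nonneg θ), hK0]
    have h3 : lam * ‖θ‖ ^ 2 - L * ‖θ‖ - K ≤ F θ :=
      key_lower θ _ (fun ξ hξ => hlow θ ξ hξ)
    linarith
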